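/- arXiv:2009.00572 — 2 statements merged into one kernel-verified Lean document; each statement's English description precedes it below -/
import Mathlib

section
/- Let X_n (n ≥ 1) and X be random elements of C[0,∞], the Banach space of continuous real-valued functions f on [0,∞) for which f(∞) := lim_{t→∞} f(t) exists, equipped with the supremum norm. Then X_n converges in distribution to X in C[0,∞] if and only if both of the following hold: (i) X_n converges in distribution to X in C[0,∞) with the topology of uniform convergence on compact subsets of [0,∞); and (ii) for every ε > 0, sup_{n≥1} P( sup_{u < t < ∞} |X_n(t) − X_n(∞)| > ε ) → 0 as u → ∞. -/
open MeasureTheory Filter Topology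
open scoped NNReal

noncomputable section

/-- `C[0,∞]`: continuous functions on `[0,∞)` having a limit at `∞`, i.e. continuous
functions on the one-point compactification of `[0,∞)`; since the domain is compact, the
canonical (compact-open) topology is that of the supremum norm. -/
abbrev CooInfty := C(OnePoint ℝ≥0, ℝ)

instance : MeasurableSpace CooInfty := borel _

instance : BorelSpace CooInfty := ⟨rfl⟩

/-- restriction to `[0,∞)`, as an element of `C[0,∞)` with the compact-open topology
(uniform convergence on compact sets) -/
def restrictFin (f : CooInfty) : C(ℝ≥0, ℝ) :=
  f.comp ⟨fun t => (t : OnePoint ℝ≥0), OnePoint.continuous_coe⟩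

/-- convergence in distribution of random elements of a topological space: weak convergence
of the laws, i.e. convergence of expectations of all bounded continuous functions -/
def ConvInDist {Ω E : Type*} [MeasurableSpace Ω] [TopologicalSpace E]
    (μ : Measure Ω) (X : ℕ → Ω → E) (Y : Ω → E) : Prop :=
  ∀ f : BoundedContinuousFunction E ℝ,
    Tendsto (fun n => ∫ ω, f (X n ω) ∂μ) atTop (𝓝 (∫ ω, f (Y ω) ∂μ))

/-!
Restriction to `[0,∞)` is continuous, which gives (i). For (ii), the sets `tailOsc u ε` of
paths oscillating by more than `ε` after time `u` shrink to `∅` as `u → ∞`, and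
`closure (tailOsc u ε) ⊆ tailOsc u (ε / 2)`; the portmanteau bound for this closed set controls
all but finitely many `n` at once, and each of the remaining `X n` individually.

Conversely, stopping a path at time `u` factors through the restriction to `[0,∞)` by a continuous
map, and moves every path outside `tailOsc u ε` by at most `2ε` in the sup norm. Hence for a
bounded Lipschitz `f` the integrals of `f` along the stopped paths, which converge by (i),
approximate those along the original paths uniformly in `n` by (ii); and bounded Lipschitz test
functions suffice for weak convergence.
-/

open OnePoint
open scoped BoundedContinuousFunction

theorem tendsto_iSup_nhds_zero_of_antitone {β : Type*} [SemilatticeSup β] [Nonempty β]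
    {a : ℕ → β → ENNReal} (ha : ∀ n, Antitone (a n)) (h0 : ∀ n, Tendsto (a n) atTop (𝓝 0))
    (htail : ∀ δ > 0, ∃ u, ∀ᶠ n in atTop, a n u < δ) :
    Tendsto (fun u => ⨆ n, a n u) atTop (𝓝 0) := by
  refine ENNReal.tendsto_nhds_zero.2 fun δ hδ => ?_
  obtain ⟨u₀, hu₀⟩ := htail δ hδ
  obtain ⟨N, hN⟩ := eventually_atTop.1 hu₀
  have hsmall : ∀ᶠ u in atTop, ∀ n < N, a n u ≤ δ :=
    (Set.finite_lt_nat N).eventually_all.2 fun n _ => (h0 n).eventually_le_const hδ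
  filter_upwards [hsmall, eventually_ge_atTop u₀] with u hu hu₀u
  refine iSup_le fun n => ?_
  rcases lt_or_ge n N with hn | hn
  · exact hu n hn
  · exact (ha n hu₀u).trans (hN n hn).le

section ConvInDist

variable {Ω E : Type*} [MeasurableSpace Ω] {μ : Measure Ω} {X : ℕ → Ω → E} {Y : Ω → E}

theorem ConvInDist.comp_continuous [TopologicalSpace E] {F : Type*} [TopologicalSpace F]
    (h : ConvInDist μ X Y) {g : E → F} (hg : Continuous g) :
    ConvInDist μ (fun n ω => g (X n ω)) (fun ω => g (Y ω)) :=
  fun f => h (f.compContinuous ⟨g, hg⟩)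

variable [IsProbabilityMeasure μ] [MeasurableSpace E]

variable (μ) in
def law {Z : Ω → E} (hZ : AEMeasurable Z μ) : ProbabilityMeasure E :=
  ⟨μ.map Z, Measure.isProbabilityMeasure_map hZ⟩

theorem convInDist_iff_tendsto_law [TopologicalSpace E] [OpensMeasurableSpace E]
    (hX : ∀ n, AEMeasurable (X n) μ) (hY : AEMeasurable Y μ) :
    ConvInDist μ X Y ↔ Tendsto (fun n => law μ (hX n)) atTop (𝓝 (law μ hY)) := by
  rw [ProbabilityMeasure.tendsto_iff_forall_integral_tendsto]
  refine forall_congr' fun f => ?_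
  simp only [law, ProbabilityMeasure.coe_mk,
    integral_map (hX _) f.continuous.aestronglyMeasurable,
    integral_map hY f.continuous.aestronglyMeasurable]

theorem ConvInDist.limsup_measure_preimage_le [TopologicalSpace E] [OpensMeasurableSpace E]
    [HasOuterApproxClosed E] (h : ConvInDist μ X Y)
    (hX : ∀ n, AEMeasurable (X n) μ) (hY : AEMeasurable Y μ) {F : Set E} (hF : IsClosed F) :
    atTop.limsup (fun n => μ (X n ⁻¹' F)) ≤ μ (Y ⁻¹' F) := by
  have := ProbabilityMeasure.limsup_measure_closed_le_of_tendsto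
    ((convInDist_iff_tendsto_law hX hY).1 h) hF
  simpa only [law, ProbabilityMeasure.coe_mk,
    Measure.map_apply_of_aemeasurable (hX _) hF.measurableSet,
    Measure.map_apply_of_aemeasurable hY hF.measurableSet] using this

theorem convInDist_of_forall_lipschitz [PseudoMetricSpace E] [OpensMeasurableSpace E]
    (hX : ∀ n, AEMeasurable (X n) μ) (hY : AEMeasurable Y μ)
    (h : ∀ (f : E →ᵇ ℝ) (K : ℝ≥0), LipschitzWith K f →
      Tendsto (fun n => ∫ ω, f (X n ω) ∂μ) atTop (𝓝 (∫ ω, f (Y ω) ∂μ))) :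
    ConvInDist μ X Y := by
  rw [convInDist_iff_tendsto_law hX hY, tendsto_iff_forall_lipschitz_integral_tendsto]
  rintro f ⟨C, hC⟩ ⟨K, hf⟩
  simp only [law, ProbabilityMeasure.coe_mk,
    integral_map (hX _) hf.continuous.aestronglyMeasurable,
    integral_map hY hf.continuous.aestronglyMeasurable]
  exact h (.mkOfBound ⟨f, hf.continuous⟩ C hC) K hf

theorem abs_integral_sub_integral_le_of_dist_le [PseudoMetricSpace E] [OpensMeasurableSpace E]
    (f : E →ᵇ ℝ) {K : ℝ≥0} (hf : LipschitzWith K f)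
    {Z Z' : Ω → E} (hZ : Measurable Z) (hZ' : Measurable Z') {S : Set Ω} (hS : MeasurableSet S)
    {η : ℝ} (hη : 0 ≤ η) (hclose : ∀ ω ∉ S, dist (Z ω) (Z' ω) ≤ η) :
    |∫ ω, f (Z ω) ∂μ - ∫ ω, f (Z' ω) ∂μ| ≤ 2 * ‖f‖ * μ.real S + K * η := by
  have hint : ∀ {W : Ω → E}, Measurable W → Integrable (fun ω => f (W ω)) μ := fun hW =>
    (f.integrable (μ.map _)).comp_measurable hW
  have hbound : ∀ ω, |f (Z ω) - f (Z' ω)| ≤ S.indicator (fun _ => 2 * ‖f‖) ω + K * η := by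
    intro ω
    by_cases hω : ω ∈ S
    · rw [Set.indicator_of_mem hω, ← Real.dist_eq]
      linarith [f.dist_le_two_norm (Z ω) (Z' ω), mul_nonneg K.coe_nonneg hη]
    · rw [Set.indicator_of_notMem hω, zero_add, ← Real.dist_eq]
      exact hf.dist_le_mul_of_le (hclose ω hω)
  calc |∫ ω, f (Z ω) ∂μ - ∫ ω, f (Z' ω) ∂μ|
      = |∫ ω, (f (Z ω) - f (Z' ω)) ∂μ| := by rw [integral_sub (hint hZ) (hint hZ')]
    _ ≤ ∫ ω, |f (Z ω) - f (Z' ω)| ∂μ := abs_integral_le_integral_abs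
    _ ≤ ∫ ω, (S.indicator (fun _ => 2 * ‖f‖) ω + K * η) ∂μ :=
        integral_mono ((hint hZ).sub (hint hZ')).abs
          (((integrable_const _).indicator hS).add (integrable_const _)) hbound
    _ = 2 * ‖f‖ * μ.real S + K * η := by
        rw [integral_add ((integrable_const _).indicator hS) (integrable_const _),
          integral_indicator_const _ hS, integral_const, probReal_univ, smul_eq_mul, smul_eq_mul,
          one_mul, mul_comm (μ.real S)]

end ConvInDist

theorem continuous_restrictFin : Continuous restrictFin :=
  ContinuousMap.continuous_precomp _

theorem tendsto_atTop_apply_infty (g : CooInfty) :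
    Tendsto (fun t : ℝ≥0 => g t) atTop (𝓝 (g ∞)) := by
  have h := (g.continuous.tendsto ∞).comp OnePoint.tendsto_coe_infty
  rwa [coclosedCompact_eq_cocompact, cocompact_eq_atTop] at h

def tailOsc (u : ℝ≥0) (ε : ℝ) : Set CooInfty :=
  {g | ∃ t : ℝ≥0, u < t ∧ ε < |g t - g ∞|}

theorem isOpen_tailOsc (u : ℝ≥0) (ε : ℝ) : IsOpen (tailOsc u ε) := by
  have : tailOsc u ε = ⋃ t > u, {g : CooInfty | ε < |g t - g ∞|} := by
    ext g; simp [tailOsc]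
  rw [this]
  exact isOpen_biUnion fun t _ => isOpen_lt continuous_const
    ((continuous_eval_const _).sub (continuous_eval_const _)).abs

theorem tailOsc_anti (ε : ℝ) : Antitone fun u => tailOsc u ε :=
  fun _ _ huv _ ⟨t, ht, hg⟩ => ⟨t, huv.trans_lt ht, hg⟩

theorem iInter_tailOsc {ε : ℝ} (hε : 0 < ε) : ⋂ u, tailOsc u ε = ∅ := by
  refine Set.eq_empty_of_forall_notMem fun g hg => ?_
  obtain ⟨u, hu⟩ := eventually_atTop.1
    ((tendsto_atTop_apply_infty g).eventually (eventually_abs_sub_lt (g ∞) hε))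
  obtain ⟨t, ht, hgt⟩ := Set.mem_iInter.1 hg u
  exact (hu t ht.le).not_gt hgt

theorem closure_tailOsc_subset {u : ℝ≥0} {ε ε' : ℝ} (hε : ε' < ε) :
    closure (tailOsc u ε) ⊆ tailOsc u ε' := by
  intro g hg
  obtain ⟨h, ⟨t, ht, hh⟩, hgh⟩ := Metric.mem_closure_iff.1 hg ((ε - ε') / 2) (by linarith)
  have h₁ : |g t - h t| < (ε - ε') / 2 :=
    (ContinuousMap.dist_apply_le_dist (t : OnePoint ℝ≥0)).trans_lt hgh
  have h₂ : |g ∞ - h ∞| < (ε - ε') / 2 := (ContinuousMap.dist_apply_le_dist ∞).trans_lt hgh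
  refine ⟨t, ht, ?_⟩
  rw [abs_lt] at h₁ h₂
  rw [lt_abs] at hh ⊢
  rcases hh with hh | hh
  · left; linarith
  · right; linarith

theorem tendsto_measure_preimage_tailOsc {Ω : Type*} [MeasurableSpace Ω] (μ : Measure Ω)
    [IsFiniteMeasure μ] {Z : Ω → CooInfty} (hZ : Measurable Z) {ε : ℝ} (hε : 0 < ε) :
    Tendsto (fun u => μ (Z ⁻¹' tailOsc u ε)) atTop (𝓝 0) := by
  have := tendsto_measure_iInter_atTop (μ := μ)
    (fun u => (hZ (isOpen_tailOsc u ε).measurableSet).nullMeasurableSet)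
    (fun u v huv => Set.preimage_mono (tailOsc_anti ε huv)) ⟨0, measure_ne_top μ _⟩
  rwa [← Set.preimage_iInter, iInter_tailOsc hε, Set.preimage_empty, measure_empty] at this

def clampAt (u : ℝ≥0) : C(OnePoint ℝ≥0, ℝ≥0) :=
  OnePoint.continuousMapMk ⟨fun t => min t u, by fun_prop⟩ u <| by
    rw [coclosedCompact_eq_cocompact, cocompact_eq_atTop]
    exact tendsto_const_nhds.congr' <|
      (eventually_ge_atTop u).mono fun t ht => (min_eq_right ht).symm

def stopAt (u : ℝ≥0) : C(C(ℝ≥0, ℝ), CooInfty) :=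
  ContinuousMap.compRightContinuousMap ℝ (clampAt u)

theorem dist_stopAt_restrictFin_le {g : CooInfty} {u v : ℝ≥0} {ε : ℝ}
    (hg : ∀ t : ℝ≥0, u < t → |g t - g ∞| ≤ ε) (huv : u < v) :
    dist g (stopAt v (restrictFin g)) ≤ 2 * ε := by
  have hv := hg v huv
  have hε : 0 ≤ ε := (abs_nonneg _).trans hv
  rw [ContinuousMap.dist_le (by positivity)]
  intro x
  induction x using OnePoint.rec with
  | infty =>
    change |g ∞ - g v| ≤ 2 * ε
    rw [abs_sub_comm]; linarith
  | coe t =>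
    change |g t - g ↑(min t v)| ≤ 2 * ε
    rcases le_or_gt t v with htv | hvt
    · rw [min_eq_left htv, sub_self, abs_zero]; positivity
    · rw [min_eq_right hvt.le]
      calc |g t - g v| ≤ |g t - g ∞| + |g v - g ∞| := by
            simpa only [Real.dist_eq] using dist_triangle_right (g t) (g v) (g ∞)
        _ ≤ 2 * ε := by linarith [hg t (huv.trans hvt)]

section RandomPaths

variable {Ω : Type*} [MeasurableSpace Ω] {μ : Measure Ω} [IsProbabilityMeasure μ]
  {X : ℕ → Ω → CooInfty} {Y : Ω → CooInfty}

theorem ConvInDist.tendsto_iSup_measure_preimage_tailOsc (h : ConvInDist μ X Y)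
    (hX : ∀ n, Measurable (X n)) (hY : Measurable Y) {ε : ℝ} (hε : 0 < ε) :
    Tendsto (fun u => ⨆ n, μ (X n ⁻¹' tailOsc u ε)) atTop (𝓝 0) := by
  refine tendsto_iSup_nhds_zero_of_antitone
    (fun n u v huv => measure_mono (Set.preimage_mono (tailOsc_anti ε huv)))
    (fun n => tendsto_measure_preimage_tailOsc μ (hX n) hε) fun δ hδ => ?_
  obtain ⟨u, hu⟩ :=
    ((tendsto_measure_preimage_tailOsc μ hY (half_pos hε)).eventually_lt_const hδ).exists
  have hlimsup : atTop.limsup (fun n => μ (X n ⁻¹' closure (tailOsc u ε))) < δ :=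
    calc _ ≤ μ (Y ⁻¹' closure (tailOsc u ε)) :=
          h.limsup_measure_preimage_le (fun n => (hX n).aemeasurable) hY.aemeasurable
            isClosed_closure
      _ ≤ μ (Y ⁻¹' tailOsc u (ε / 2)) :=
          measure_mono (Set.preimage_mono (closure_tailOsc_subset (half_lt_self hε)))
      _ < δ := hu
  exact ⟨u, (eventually_lt_of_limsup_lt hlimsup).mono fun n hn =>
    (measure_mono (Set.preimage_mono subset_closure)).trans_lt hn⟩

theorem abs_integral_sub_integral_stopAt_le (f : CooInfty →ᵇ ℝ) {K : ℝ≥0}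
    (hf : LipschitzWith K f) {Z : Ω → CooInfty} (hZ : Measurable Z) {u v : ℝ≥0} (huv : u < v)
    {ε : ℝ} (hε : 0 ≤ ε) :
    |∫ ω, f (Z ω) ∂μ - ∫ ω, f (stopAt v (restrictFin (Z ω))) ∂μ| ≤
      2 * ‖f‖ * μ.real (Z ⁻¹' tailOsc u ε) + K * (2 * ε) := by
  refine abs_integral_sub_integral_le_of_dist_le f hf hZ
    (((stopAt v).continuous.comp continuous_restrictFin).measurable.comp hZ)
    (hZ (isOpen_tailOsc u ε).measurableSet) (by positivity) fun ω hω => ?_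
  refine dist_stopAt_restrictFin_le (fun t ht => ?_) huv
  exact not_lt.1 fun h => hω ⟨t, ht, h⟩

theorem tendstoUniformly_integral_stopAt (hX : ∀ n, Measurable (X n))
    (hT : ∀ ε > 0, Tendsto (fun u => ⨆ n, μ (X n ⁻¹' tailOsc u ε)) atTop (𝓝 0))
    (f : CooInfty →ᵇ ℝ) {K : ℝ≥0} (hf : LipschitzWith K f) :
    TendstoUniformly (fun u n => ∫ ω, f (stopAt u (restrictFin (X n ω))) ∂μ)
      (fun n => ∫ ω, f (X n ω) ∂μ) atTop := by
  rw [Metric.tendstoUniformly_iff]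
  intro δ hδ
  obtain ⟨ε, hε, hεδ⟩ := exists_pos_mul_lt (half_pos hδ) (K * 2)
  obtain ⟨η, hη, hηδ⟩ := exists_pos_mul_lt (half_pos hδ) (2 * ‖f‖)
  obtain ⟨u, hu⟩ := ((hT ε hε).eventually_lt_const (ENNReal.ofReal_pos.2 hη)).exists
  filter_upwards [eventually_gt_atTop u] with v huv n
  have hS : μ.real (X n ⁻¹' tailOsc u ε) ≤ η :=
    ENNReal.toReal_le_of_le_ofReal hη.le
      ((le_iSup (fun n => μ (X n ⁻¹' tailOsc u ε)) n).trans hu.le)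
  have hest := abs_integral_sub_integral_stopAt_le (μ := μ) f hf (hX n) huv hε.le
  have : 2 * ‖f‖ * μ.real (X n ⁻¹' tailOsc u ε) ≤ 2 * ‖f‖ * η :=
    mul_le_mul_of_nonneg_left hS (by positivity)
  rw [Real.dist_eq]
  linarith

theorem tendsto_integral_of_convInDist_restrictFin (hX : ∀ n, Measurable (X n))
    (hY : Measurable Y)
    (hR : ConvInDist μ (fun n ω => restrictFin (X n ω)) (fun ω => restrictFin (Y ω)))
    (hT : ∀ ε > 0, Tendsto (fun u => ⨆ n, μ (X n ⁻¹' tailOsc u ε)) atTop (𝓝 0))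
    (f : CooInfty →ᵇ ℝ) {K : ℝ≥0} (hf : LipschitzWith K f) :
    Tendsto (fun n => ∫ ω, f (X n ω) ∂μ) atTop (𝓝 (∫ ω, f (Y ω) ∂μ)) := by
  have hTY : ∀ ε > 0, Tendsto (fun u => ⨆ _ : ℕ, μ (Y ⁻¹' tailOsc u ε)) atTop (𝓝 0) :=
    fun ε hε => by simpa only [ciSup_const] using tendsto_measure_preimage_tailOsc μ hY hε
  exact (tendstoUniformly_integral_stopAt hX hT f hf).tendsto_of_eventually_tendsto
    (Eventually.of_forall fun u => hR (f.compContinuous (stopAt u)))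
    ((tendstoUniformly_integral_stopAt (fun _ => hY) hTY f hf).tendsto_at 0)

end RandomPaths

theorem stmt_0 {Ω : Type*} [MeasurableSpace Ω] (μ : Measure Ω) [IsProbabilityMeasure μ]
    (X : ℕ → Ω → CooInfty) (Y : Ω → CooInfty)
    (hX : ∀ n, Measurable (X n)) (hY : Measurable Y) :
    ConvInDist μ X Y ↔
      (ConvInDist μ (fun n ω => restrictFin (X n ω)) (fun ω => restrictFin (Y ω)) ∧
        ∀ ε : ℝ, 0 < ε →
          Tendsto
            (fun u : ℝ≥0 => ⨆ n : ℕ,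
              μ {ω | ∃ t : ℝ≥0, u < t ∧
                ε < |X n ω (t : OnePoint ℝ≥0) - X n ω (OnePoint.infty)|})
            atTop (𝓝 0)) := by
  refine ⟨fun h => ⟨h.comp_continuous continuous_restrictFin,
    fun ε hε => h.tendsto_iSup_measure_preimage_tailOsc hX hY hε⟩, fun ⟨hR, hT⟩ => ?_⟩
  exact convInDist_of_forall_lipschitz (fun n => (hX n).aemeasurable) hY.aemeasurable
    fun f _ hf => tendsto_integral_of_convInDist_restrictFin hX hY hR hT f hf
end
end

section
/- Let f : ℝ → ℝ be a function that is initially defined on the integers, with Σ_{k∈ℤ} |f(k)| < ∞, and extended to ℝ by linear interpolation (f is affine on each interval [k, k+1]). Define f̂(ξ) := Σ_{k∈ℤ} f(k) e^{iξk}. Then for every 0 < α < 1 there is a constant C_α < ∞, depending only on α, such that the Hölder seminorm of f on ℝ satisfies ||f||_{H^α(ℝ)} ≤ C_α ( ∫_{−π}^{π} |ξ|^{2α+1} |f̂(ξ)|² dξ )^{1/2}. -/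
/-!
Fourier inversion on `[-π, π]` gives `2π (f k - f m) = ∫ f̂(ξ) (e^{-iξk} - e^{-iξm}) dξ`, and
`|e^{-iξk} - e^{-iξm}| ≤ min 2 (|k - m| |ξ|)`. Writing the integrand as
`(|ξ|^{α+1/2} |f̂(ξ)|) · (|ξ|^{-α-1/2} min 2 (|k - m| |ξ|))` and applying Cauchy–Schwarz, the
second factor has squared `L²` norm `O(|k - m|^{2α})`: cut `[0, π]` at `1/|k - m|`, where
`min 2 (a t)` switches from `a t` to `2`. This is the Hölder bound on `ℤ`. On each cell `[k, k + 1]`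
the interpolant is Lipschitz with constant `|f (k + 1) - f k|`, which the integer bound controls,
and `t ≤ t ^ α` for `t ≤ 1`; going through the two integer points nearest to `x` and `y` costs a
factor `3`.
-/

/-- The Fourier transform `f̂(ξ) = Σ_{k ∈ ℤ} f(k) e^{iξk}` of the restriction of `f` to the
integers. -/
noncomputable def intFT (f : ℝ → ℝ) (ξ : ℝ) : ℂ :=
  ∑' k : ℤ, (f k : ℂ) * Complex.exp (Complex.I * (ξ : ℂ) * (k : ℂ))

open MeasureTheory Set
open scoped Real
open Complex (exp I)

lemma norm_exp_I_mul_int (ξ : ℝ) (k : ℤ) : ‖exp (I * ξ * k)‖ = 1 := by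
  simp [Complex.norm_exp]

lemma norm_ofReal_mul_exp_I_mul_int (c ξ : ℝ) (k : ℤ) :
    ‖(c : ℂ) * exp (I * ξ * k)‖ = |c| := by
  rw [norm_mul, norm_exp_I_mul_int, mul_one, Complex.norm_real, Real.norm_eq_abs]

lemma continuous_intFT {f : ℝ → ℝ} (hf : Summable fun k : ℤ => |f k|) :
    Continuous (intFT f) :=
  continuous_tsum (fun k => by fun_prop) hf fun k ξ => (norm_ofReal_mul_exp_I_mul_int _ ξ k).le

lemma integral_exp_I_mul_int (n : ℤ) :
    ∫ ξ in -π..π, exp (I * ξ * n) = if n = 0 then (2 * π : ℂ) else 0 := by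
  split_ifs with hn
  · simp [hn]; ring
  have hn' : (n : ℝ) ≠ 0 := by exact_mod_cast hn
  have h := intervalIntegral.integral_comp_mul_left (fun t : ℝ => exp (t * I)) hn'
    (a := -π) (b := π)
  simp only [mul_neg, integral_exp_mul_I_eq_sin, Real.sin_int_mul_pi] at h
  simpa [mul_comm, mul_left_comm, mul_assoc] using h

lemma integral_intFT_mul_exp {f : ℝ → ℝ} (hf : Summable fun k : ℤ => |f k|) (k : ℤ) :
    ∫ ξ in -π..π, intFT f ξ * exp (-(I * ξ * k)) = 2 * π * f k := by
  have hterm : ∀ ξ : ℝ, intFT f ξ * exp (-(I * ξ * k)) =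
      ∑' j : ℤ, (f j : ℂ) * exp (I * ξ * (j - k : ℤ)) := by
    intro ξ
    rw [intFT, ← tsum_mul_right]
    refine tsum_congr fun j => ?_
    rw [mul_assoc, ← Complex.exp_add]
    push_cast; ring_nf
  have horth : ∀ j : ℤ, ∫ ξ in -π..π, (f j : ℂ) * exp (I * ξ * (j - k : ℤ)) =
      if j = k then (2 * π * f k : ℂ) else 0 := by
    intro j
    rw [intervalIntegral.integral_const_mul, integral_exp_I_mul_int]
    by_cases h : j = k
    · subst h; simp; ring
    · simp [h, sub_eq_zero]
  have hle : -π ≤ π := by linarith [Real.pi_pos]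
  simp_rw [hterm]
  rw [intervalIntegral.integral_of_le hle, ← integral_tsum_of_summable_integral_norm]
  · simp_rw [← intervalIntegral.integral_of_le hle, horth]
    exact tsum_ite_eq k _
  · intro j
    exact (by fun_prop : Continuous fun ξ : ℝ => (f j : ℂ) * exp (I * ξ * (j - k : ℤ)))
      |>.integrableOn_Ioc
  · simp_rw [norm_ofReal_mul_exp_I_mul_int, integral_const, smul_eq_mul]
    exact hf.mul_left _

lemma IntervalIntegrable.comp_abs {G : ℝ → ℝ} {b : ℝ} (hb : 0 ≤ b)
    (hG : IntervalIntegrable G volume 0 b) :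
    IntervalIntegrable (fun x => G |x|) volume (-b) b := by
  have hpos : IntervalIntegrable (fun x => G |x|) volume 0 b :=
    hG.congr fun x hx => by rw [uIoc_of_le hb] at hx; simp [abs_of_pos hx.1]
  have hneg : IntervalIntegrable (fun x => G |x|) volume (-b) 0 := by
    simpa using ((IntervalIntegrable.iff_comp_neg).mp hpos).symm
  exact hneg.trans hpos

lemma intervalIntegral.integral_comp_abs {G : ℝ → ℝ} {b : ℝ} (hb : 0 ≤ b)
    (hG : IntervalIntegrable G volume 0 b) :
    ∫ x in -b..b, G |x| = 2 * ∫ x in 0..b, G x := by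
  have hpos : ∫ x in 0..b, G |x| = ∫ x in 0..b, G x :=
    integral_congr fun x hx => by rw [uIcc_of_le hb] at hx; simp [abs_of_nonneg hx.1]
  have hneg : ∫ x in -b..0, G |x| = ∫ x in 0..b, G |x| := by
    simpa using (integral_comp_neg (a := 0) (b := b) fun x => G |x|).symm
  have hint := hG.comp_abs hb
  rw [← integral_add_adjacent_intervals (b := 0)
    (hint.mono_set (uIcc_subset_uIcc (by simp) (by simp [hb])))
    (hint.mono_set (uIcc_subset_uIcc (by simp [hb]) (by simp))), hneg, hpos, two_mul]

section

variable {α a : ℝ}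

lemma min_sq_mul_rpow_le_mul_rpow (ha : 0 ≤ a) {t : ℝ} (ht : 0 ≤ t) :
    min 2 (a * t) ^ 2 * t ^ (-(2 * α + 1)) ≤ a ^ 2 * t ^ (1 - 2 * α) := by
  rcases ht.eq_or_lt with rfl | ht
  · simp only [mul_zero, min_eq_right zero_le_two]; norm_num; positivity
  calc min 2 (a * t) ^ 2 * t ^ (-(2 * α + 1)) ≤ (a * t) ^ 2 * t ^ (-(2 * α + 1)) := by
        gcongr
        exact min_le_right _ _
    _ = a ^ 2 * t ^ (1 - 2 * α) := by
        rw [mul_pow, mul_assoc, ← Real.rpow_natCast t 2, ← Real.rpow_add ht]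
        congr 2; push_cast; ring

lemma min_sq_mul_rpow_le_four_mul_rpow (ha : 0 ≤ a) {t : ℝ} (ht : 0 ≤ t) :
    min 2 (a * t) ^ 2 * t ^ (-(2 * α + 1)) ≤ 4 * t ^ (-(2 * α + 1)) := by
  gcongr
  calc min 2 (a * t) ^ 2 ≤ 2 ^ 2 := by
        gcongr
        exact min_le_left _ _
    _ = 4 := by norm_num

lemma intervalIntegrable_min_sq_mul_rpow (hα1 : α < 1) (ha : 0 ≤ a) {b : ℝ} (hb : 0 ≤ b) :
    IntervalIntegrable (fun t => min 2 (a * t) ^ 2 * t ^ (-(2 * α + 1))) volume 0 b := by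
  refine (((intervalIntegral.intervalIntegrable_rpow' (r := 1 - 2 * α) (by linarith)).const_mul
    (a ^ 2))).mono_fun' (by fun_prop) ?_
  rw [Filter.EventuallyLE, ae_restrict_iff' measurableSet_uIoc]
  refine Filter.Eventually.of_forall fun t ht => ?_
  rw [uIoc_of_le hb] at ht
  rw [Real.norm_of_nonneg (mul_nonneg (sq_nonneg _) (Real.rpow_nonneg ht.1.le _))]
  exact min_sq_mul_rpow_le_mul_rpow ha ht.1.le

lemma integral_min_sq_mul_rpow_le (hα0 : 0 < α) (hα1 : α < 1) (ha : π⁻¹ ≤ a) :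
    ∫ t in 0..π, min 2 (a * t) ^ 2 * t ^ (-(2 * α + 1)) ≤
      (1 / (2 - 2 * α) + 2 / α) * a ^ (2 * α) := by
  have ha0 : 0 < a := (inv_pos.2 Real.pi_pos).trans_le ha
  set c := a⁻¹ with hc_def
  have hc : 0 < c := inv_pos.2 ha0
  have hcπ : c ≤ π := inv_le_of_inv_le₀ Real.pi_pos ha
  have hπc : (0 : ℝ) ∉ uIcc c π := notMem_uIcc_of_lt hc Real.pi_pos
  have hG {b : ℝ} (hb : 0 ≤ b) := intervalIntegrable_min_sq_mul_rpow hα1 ha0.le hb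
  have hGc : IntervalIntegrable (fun t => min 2 (a * t) ^ 2 * t ^ (-(2 * α + 1))) volume c π :=
    (hG Real.pi_pos.le).mono_set (uIcc_subset_uIcc (mem_uIcc_of_le hc.le hcπ) right_mem_uIcc)
  have hsmall :
      ∫ t in 0..c, min 2 (a * t) ^ 2 * t ^ (-(2 * α + 1)) ≤ a ^ (2 * α) / (2 - 2 * α) :=
    calc _ ≤ ∫ t in 0..c, a ^ 2 * t ^ (1 - 2 * α) :=
          intervalIntegral.integral_mono_on hc.le (hG hc.le)
            ((intervalIntegral.intervalIntegrable_rpow' (by linarith)).const_mul _)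
            fun t ht => min_sq_mul_rpow_le_mul_rpow ha0.le ht.1
      _ = a ^ (2 * α) / (2 - 2 * α) := by
          rw [intervalIntegral.integral_const_mul, integral_rpow (Or.inl (by linarith))]
          have hsplit : a ^ (2 : ℝ) = a ^ (2 * α) * a ^ (2 - 2 * α) := by
            rw [← Real.rpow_add ha0]; ring_nf
          rw [show 1 - 2 * α + 1 = 2 - 2 * α by ring, Real.zero_rpow (by linarith), sub_zero,
            hc_def, Real.inv_rpow ha0.le, ← Real.rpow_two, hsplit]
          have : 0 < a ^ (2 - 2 * α) := by positivity
          field_simp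
  have hlarge : ∫ t in c..π, min 2 (a * t) ^ 2 * t ^ (-(2 * α + 1)) ≤ 2 / α * a ^ (2 * α) :=
    calc _ ≤ ∫ t in c..π, 4 * t ^ (-(2 * α + 1)) :=
          intervalIntegral.integral_mono_on hcπ hGc
            ((intervalIntegral.intervalIntegrable_rpow (Or.inr hπc)).const_mul _)
            fun t ht => min_sq_mul_rpow_le_four_mul_rpow ha0.le (hc.le.trans ht.1)
      _ = 2 / α * (a ^ (2 * α) - π ^ (-(2 * α))) := by
          rw [intervalIntegral.integral_const_mul, integral_rpow (Or.inr ⟨by linarith, hπc⟩),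
            show -(2 * α + 1) + 1 = -(2 * α) by ring, hc_def, Real.inv_rpow ha0.le,
            Real.rpow_neg ha0.le, inv_inv]
          field_simp
          ring
      _ ≤ 2 / α * a ^ (2 * α) := by
          gcongr
          linarith [Real.rpow_nonneg Real.pi_pos.le (-(2 * α))]
  rw [← intervalIntegral.integral_add_adjacent_intervals (hG hc.le) hGc, add_mul,
    one_div_mul_eq_div]
  linarith

lemma integral_min_sq_mul_abs_rpow_le (hα0 : 0 < α) (hα1 : α < 1) (ha : π⁻¹ ≤ a) :
    ∫ ξ in -π..π, min 2 (a * |ξ|) ^ 2 * |ξ| ^ (-(2 * α + 1)) ≤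
      (1 / (1 - α) + 4 / α) * a ^ (2 * α) := by
  have ha0 : 0 < a := (inv_pos.2 Real.pi_pos).trans_le ha
  have h2α : 2 - 2 * α ≠ 0 := by linarith
  rw [intervalIntegral.integral_comp_abs (G := fun t => min 2 (a * t) ^ 2 * t ^ (-(2 * α + 1)))
    Real.pi_pos.le (intervalIntegrable_min_sq_mul_rpow hα1 ha0.le Real.pi_pos.le)]
  calc _ ≤ 2 * ((1 / (2 - 2 * α) + 2 / α) * a ^ (2 * α)) := by
        gcongr; exact integral_min_sq_mul_rpow_le hα0 hα1 ha
    _ = (1 / (1 - α) + 4 / α) * a ^ (2 * α) := by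
        field_simp; ring

lemma norm_exp_I_mul_sub_exp_I_mul_le (s t : ℝ) :
    ‖exp (I * s) - exp (I * t)‖ ≤ min 2 |s - t| := by
  refine le_min ?_ ?_
  · calc _ ≤ ‖exp (I * s)‖ + ‖exp (I * t)‖ := norm_sub_le _ _
      _ = 2 := by rw [Complex.norm_exp_I_mul_ofReal, Complex.norm_exp_I_mul_ofReal]; norm_num
  · have hfactor : exp (I * s) - exp (I * t) = exp (I * t) * (exp (I * ↑(s - t)) - 1) := by
      rw [mul_sub, mul_one, ← Complex.exp_add]; push_cast; ring_nf
    rw [hfactor, norm_mul, Complex.norm_exp_I_mul_ofReal, one_mul]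
    exact Real.norm_exp_I_mul_ofReal_sub_one_le

lemma integral_norm_mul_min_le {F : ℝ → ℂ} (hF : Continuous F) (hα0 : 0 < α) (hα1 : α < 1)
    (ha : π⁻¹ ≤ a) :
    ∫ ξ in -π..π, ‖F ξ‖ * min 2 (a * |ξ|) ≤
      (∫ ξ in -π..π, |ξ| ^ (2 * α + 1) * ‖F ξ‖ ^ 2) ^ (1 / 2 : ℝ) *
        ((1 / (1 - α) + 4 / α) * a ^ (2 * α)) ^ (1 / 2 : ℝ) := by
  have ha0 : 0 < a := (inv_pos.2 Real.pi_pos).trans_le ha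
  have hle : -π ≤ π := by linarith [Real.pi_pos]
  set q := α + 1 / 2
  set g : ℝ → ℝ := fun ξ => |ξ| ^ q * ‖F ξ‖
  set h : ℝ → ℝ := fun ξ => |ξ| ^ (-q) * min 2 (a * |ξ|)
  have hgh (ξ : ℝ) : ‖F ξ‖ * min 2 (a * |ξ|) = g ξ * h ξ := by
    rcases eq_or_ne ξ 0 with rfl | hξ
    · -- both sides vanish through `min 2 0 = 0`, whatever the junk value of `|0| ^ (-q)`
      simp [g, h]
    · have : |ξ| ^ q * |ξ| ^ (-q) = 1 := by
        rw [← Real.rpow_add (abs_pos.2 hξ), add_neg_cancel, Real.rpow_zero]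
      simp only [g, h]
      linear_combination (‖F ξ‖ * min 2 (a * |ξ|)) * this.symm
  have hg2 (ξ : ℝ) : g ξ ^ 2 = |ξ| ^ (2 * α + 1) * ‖F ξ‖ ^ 2 := by
    simp only [g, mul_pow, ← Real.rpow_mul_natCast (abs_nonneg ξ)]
    congr 2; push_cast; ring
  have hh2 (ξ : ℝ) : h ξ ^ 2 = min 2 (a * |ξ|) ^ 2 * |ξ| ^ (-(2 * α + 1)) := by
    simp only [h, mul_pow, ← Real.rpow_mul_natCast (abs_nonneg ξ)]
    rw [mul_comm]; congr 2; push_cast; ring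
  have hgc : Continuous g :=
    (continuous_abs.rpow_const fun _ => Or.inr (by positivity)).mul hF.norm
  have hgL2 : MemLp g (ENNReal.ofReal 2) (volume.restrict (Ioc (-π) π)) := by
    rw [ENNReal.ofReal_ofNat, memLp_two_iff_integrable_sq hgc.aestronglyMeasurable]
    exact (hgc.pow 2).integrableOn_Ioc
  have hhL2 : MemLp h (ENNReal.ofReal 2) (volume.restrict (Ioc (-π) π)) := by
    rw [ENNReal.ofReal_ofNat, memLp_two_iff_integrable_sq (by fun_prop)]
    simp_rw [hh2]
    exact ((intervalIntegrable_min_sq_mul_rpow hα1 ha0.le Real.pi_pos.le).comp_abs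
      Real.pi_pos.le).1
  calc ∫ ξ in -π..π, ‖F ξ‖ * min 2 (a * |ξ|) = ∫ ξ in Ioc (-π) π, g ξ * h ξ := by
        simp_rw [intervalIntegral.integral_of_le hle, hgh]
    _ ≤ (∫ ξ in Ioc (-π) π, g ξ ^ (2 : ℝ)) ^ (1 / 2 : ℝ) *
          (∫ ξ in Ioc (-π) π, h ξ ^ (2 : ℝ)) ^ (1 / 2 : ℝ) :=
        integral_mul_le_Lp_mul_Lq_of_nonneg Real.HolderConjugate.two_two
          (Filter.Eventually.of_forall fun ξ => by positivity)
          (Filter.Eventually.of_forall fun ξ => by positivity) hgL2 hhL2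
    _ = (∫ ξ in -π..π, |ξ| ^ (2 * α + 1) * ‖F ξ‖ ^ 2) ^ (1 / 2 : ℝ) *
          (∫ ξ in -π..π, min 2 (a * |ξ|) ^ 2 * |ξ| ^ (-(2 * α + 1))) ^ (1 / 2 : ℝ) := by
        simp_rw [Real.rpow_two, hg2, hh2, ← intervalIntegral.integral_of_le hle]
    _ ≤ _ := by
        gcongr
        · exact Real.rpow_nonneg (intervalIntegral.integral_nonneg hle fun ξ _ => by positivity) _
        · exact intervalIntegral.integral_nonneg hle fun ξ _ => by positivity
        · exact integral_min_sq_mul_abs_rpow_le hα0 hα1 ha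

lemma abs_sub_intCast_le {f : ℝ → ℝ} (hf : Summable fun k : ℤ => |f k|) (hα0 : 0 < α)
    (hα1 : α < 1) (k m : ℤ) :
    |f k - f m| ≤ (2 * π)⁻¹ * (1 / (1 - α) + 4 / α) ^ (1 / 2 : ℝ) *
      (∫ ξ in -π..π, |ξ| ^ (2 * α + 1) * ‖intFT f ξ‖ ^ 2) ^ (1 / 2 : ℝ) * |(k : ℝ) - m| ^ α := by
  rcases eq_or_ne k m with rfl | hkm
  · simp [hα0.ne']
  have hle : -π ≤ π := by linarith [Real.pi_pos]
  have hF := continuous_intFT hf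
  have hn : π⁻¹ ≤ |(k : ℝ) - m| := by
    have : (1 : ℝ) ≤ |(k : ℝ) - m| := by exact_mod_cast Int.one_le_abs (sub_ne_zero.2 hkm)
    linarith [inv_lt_one_of_one_lt₀ (by linarith [Real.pi_gt_three] : 1 < π)]
  have hexp (ξ : ℝ) (j : ℤ) : exp (-(I * ξ * j)) = exp (I * ↑(-(ξ * j))) := by
    push_cast; ring_nf
  have hdiff : ∫ ξ in -π..π, intFT f ξ * (exp (-(I * ξ * k)) - exp (-(I * ξ * m))) =
      2 * π * (f k - f m) := by
    have hint (j : ℤ) :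
        IntervalIntegrable (fun ξ : ℝ => intFT f ξ * exp (-(I * ξ * j))) volume (-π) π :=
      (hF.mul (by fun_prop)).intervalIntegrable _ _
    simp_rw [mul_sub]
    rw [intervalIntegral.integral_sub (hint k) (hint m), integral_intFT_mul_exp hf,
      integral_intFT_mul_exp hf]
  have hbound :
      2 * π * |f k - f m| ≤ ∫ ξ in -π..π, ‖intFT f ξ‖ * min 2 (|(k : ℝ) - m| * |ξ|) := by
    calc 2 * π * |f k - f m|
        = ‖∫ ξ in -π..π, intFT f ξ * (exp (-(I * ξ * k)) - exp (-(I * ξ * m)))‖ := by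
          rw [hdiff, norm_mul, ← Complex.ofReal_sub, Complex.norm_real, Real.norm_eq_abs]
          simp [abs_of_pos Real.pi_pos]
      _ ≤ _ := by
          refine intervalIntegral.norm_integral_le_of_norm_le hle
            (Filter.Eventually.of_forall fun ξ _ => ?_)
            ((hF.norm.mul (by fun_prop)).intervalIntegrable _ _)
          rw [norm_mul, hexp, hexp]
          gcongr
          refine (norm_exp_I_mul_sub_exp_I_mul_le _ _).trans_eq ?_
          congr 1
          rw [← abs_mul, ← abs_neg]; congr 1; ring
  have hCS := integral_norm_mul_min_le hF hα0 hα1 hn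
  rw [Real.mul_rpow (by positivity) (by positivity), ← Real.rpow_mul (abs_nonneg _)] at hCS
  rw [show 2 * α * (1 / 2 : ℝ) = α by ring] at hCS
  rw [mul_assoc, mul_assoc, le_inv_mul_iff₀ (by positivity)]
  linarith

end

section Interpolation

variable {f : ℝ → ℝ} {α : ℝ}

lemma abs_sub_le_of_affineOn_Icc {k : ℝ}
    (hk : ∀ x ∈ Icc k (k + 1), f x = (1 - (x - k)) * f k + (x - k) * f (k + 1)) (hα1 : α ≤ 1)
    {x y : ℝ} (hx : x ∈ Icc k (k + 1)) (hy : y ∈ Icc k (k + 1)) :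
    |f x - f y| ≤ |f (k + 1) - f k| * |x - y| ^ α := by
  have hxy : |x - y| ≤ 1 := abs_sub_le_iff.2 ⟨by linarith [hx.2, hy.1], by linarith [hx.1, hy.2]⟩
  calc |f x - f y| = |f (k + 1) - f k| * |x - y| := by
        rw [hk x hx, hk y hy, ← abs_mul]; ring_nf
    _ ≤ |f (k + 1) - f k| * |x - y| ^ α := by
        gcongr; exact Real.self_le_rpow_of_le_one (abs_nonneg _) hxy hα1

lemma abs_sub_le_of_abs_sub_intCast_le (hα0 : 0 ≤ α) (hα1 : α ≤ 1) {D : ℝ}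
    (hℤ : ∀ k m : ℤ, |f k - f m| ≤ D * |(k : ℝ) - m| ^ α)
    (hlin : ∀ k : ℤ, ∀ x ∈ Set.Icc (k : ℝ) ((k : ℝ) + 1),
      f x = (1 - (x - (k : ℝ))) * f k + (x - (k : ℝ)) * f ((k : ℝ) + 1))
    (x y : ℝ) : |f x - f y| ≤ 3 * D * |x - y| ^ α := by
  wlog hxy : x ≤ y generalizing x y
  · rw [abs_sub_comm, abs_sub_comm x]; exact this y x (le_of_not_ge hxy)
  have hD : 0 ≤ D := by simpa using (abs_nonneg _).trans (hℤ 1 0)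
  have hcell (k : ℤ) {u v : ℝ} (hu : u ∈ Icc (k : ℝ) (k + 1)) (hv : v ∈ Icc (k : ℝ) (k + 1)) :
      |f u - f v| ≤ D * |u - v| ^ α := by
    refine (abs_sub_le_of_affineOn_Icc (hlin k) hα1 hu hv).trans ?_
    gcongr
    simpa using hℤ (k + 1) k
  have hmono {u v : ℝ} (hu : x ≤ u) (hv : v ≤ y) (huv : u ≤ v) :
      D * |u - v| ^ α ≤ D * |x - y| ^ α := by
    refine mul_le_mul_of_nonneg_left (Real.rpow_le_rpow (abs_nonneg _) ?_ hα0) hD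
    rw [abs_of_nonpos (by linarith : u - v ≤ 0), abs_of_nonpos (by linarith : x - y ≤ 0)]
    linarith
  have hx : x ∈ Icc (⌊x⌋ : ℝ) (⌊x⌋ + 1) := ⟨Int.floor_le x, (Int.lt_floor_add_one x).le⟩
  have hy : y ∈ Icc (⌊y⌋ : ℝ) (⌊y⌋ + 1) := ⟨Int.floor_le y, (Int.lt_floor_add_one y).le⟩
  have hDxy : 0 ≤ D * |x - y| ^ α := by positivity
  rcases (Int.floor_le_floor hxy).eq_or_lt with hkm | hkm
  · rw [← hkm] at hy
    linarith [hcell _ hx hy]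
  · have hk1m : (⌊x⌋ : ℝ) + 1 ≤ ⌊y⌋ := by exact_mod_cast hkm
    have h₁ := (hcell ⌊x⌋ hx ⟨by linarith, le_rfl⟩).trans (hmono le_rfl (by linarith [hy.1]) hx.2)
    have h₂ := (hℤ (⌊x⌋ + 1) ⌊y⌋).trans (by push_cast; exact hmono (by linarith [hx.2]) hy.1 hk1m)
    have h₃ := (hcell ⌊y⌋ ⟨le_rfl, by linarith⟩ hy).trans (hmono (by linarith [hx.2]) le_rfl hy.1)
    push_cast at h₂
    linarith [abs_sub_le (f x) (f (⌊x⌋ + 1)) (f y), abs_sub_le (f (⌊x⌋ + 1)) (f ⌊y⌋) (f y)]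

end Interpolation

theorem stmt_15 (α : ℝ) (hα0 : 0 < α) (hα1 : α < 1) :
    ∃ C : ℝ, ∀ f : ℝ → ℝ,
      Summable (fun k : ℤ => |f k|) →
      (∀ k : ℤ, ∀ x ∈ Set.Icc (k : ℝ) ((k : ℝ) + 1),
        f x = (1 - (x - (k : ℝ))) * f k + (x - (k : ℝ)) * f ((k : ℝ) + 1)) →
      ∀ x y : ℝ, x ≠ y →
        |f x - f y| ≤
          C * (∫ ξ in (-Real.pi)..Real.pi, |ξ| ^ (2 * α + 1) * ‖intFT f ξ‖ ^ 2)
              ^ (1 / 2 : ℝ) * |x - y| ^ α := by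
  refine ⟨3 * ((2 * π)⁻¹ * (1 / (1 - α) + 4 / α) ^ (1 / 2 : ℝ)), fun f hf hlin x y _ => ?_⟩
  have hℤ := abs_sub_intCast_le hf hα0 hα1
  exact (abs_sub_le_of_abs_sub_intCast_le hα0.le hα1.le hℤ hlin x y).trans_eq (by ring)
end
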